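/- arXiv:1509.07973 — 6 statements merged into one kernel-verified Lean document; each statement's English description precedes it below -/
import Mathlib

section
/- Let s, t, k be positive integers and let A* be the truncation to degree k of the binomial power series (1-x)^{-t/s} over ℚ. Then 1 - (1-x)^t·(A*)^s, viewed as a formal power series in ℚ[[x]], has order of vanishing at least k+1 at x = 0 (i.e. its coefficients of x^0, x^1, ..., x^k all vanish). -/
open Polynomial PowerSeries

noncomputable def gser (r : ℚ) : PowerSeries ℚ :=
  PowerSeries.mk fun m => (-1)^m * Ring.choose r m

lemma gser_mul (a b : ℚ) : gser a * gser b = gser (a + b) := by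
  ext n
  rw [PowerSeries.coeff_mul]
  simp only [gser, PowerSeries.coeff_mk]
  rw [Ring.add_choose_eq n (Commute.all a b), Finset.mul_sum]
  refine Finset.sum_congr rfl fun ij hij => ?_
  have h := Finset.HasAntidiagonal.mem_antidiagonal.mp hij
  rw [← h, pow_add]
  ring

lemma gser_zero : gser 0 = 1 := by
  ext n
  simp only [gser, PowerSeries.coeff_mk, PowerSeries.coeff_one]
  cases n with
  | zero => simp [Ring.choose_zero_right]
  | succ m => simp [Ring.choose_zero_succ]

lemma gser_one : gser 1 = 1 - PowerSeries.X := by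
  ext n
  have : (1 : ℚ) = ((1 : ℕ) : ℚ) := by norm_num
  simp only [gser, PowerSeries.coeff_mk, map_sub, PowerSeries.coeff_one, PowerSeries.coeff_X,
    this, Ring.choose_natCast]
  match n with
  | 0 => simp
  | 1 => simp
  | (m+2) => simp [Nat.choose_eq_zero_of_lt (by omega : 1 < m + 2)]

lemma gser_nat (n : ℕ) : gser n = (1 - PowerSeries.X)^n := by
  induction n with
  | zero => simpa using gser_zero
  | succ m ih =>
    rw [pow_succ, ← ih, ← gser_one, gser_mul]
    push_cast
    ring_nf

lemma gser_pow (a : ℚ) (n : ℕ) : (gser a)^n = gser (n * a) := by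
  induction n with
  | zero => simpa using gser_zero.symm
  | succ m ih =>
    rw [pow_succ, ih, gser_mul]
    push_cast
    ring_nf

theorem stmt_10 (s t k : ℕ) (hs : 0 < s) (ht : 0 < t) (hk : 0 < k) :
    let f : PowerSeries ℚ := PowerSeries.mk fun m => (-1)^m * Ring.choose (-(t : ℚ)/s) m
    let Astar : Polynomial ℚ := PowerSeries.trunc (k+1) f
    ∀ i ≤ k,
      PowerSeries.coeff i
        (1 - (1 - PowerSeries.X)^t * (Astar : PowerSeries ℚ)^s) = 0 := by
  intro f Astar i hi
  have hf : f = gser (-(t : ℚ)/s) := rfl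
  -- main identity: (1-X)^t * f^s = 1
  have hmain : (1 - PowerSeries.X)^t * f^s = 1 := by
    rw [hf, gser_pow, ← gser_nat]
    rw [gser_mul]
    have hs' : (s : ℚ) ≠ 0 := Nat.cast_ne_zero.mpr hs.ne'
    have : (t : ℚ) + s * (-(t : ℚ)/s) = 0 := by field_simp; ring
    rw [this, gser_zero]
  -- X^(k+1) divides f - Astar
  have hdvd : (PowerSeries.X : PowerSeries ℚ)^(k+1) ∣ f - (Astar : PowerSeries ℚ) := by
    rw [PowerSeries.X_pow_dvd_iff]
    intro m hm
    simp [Astar, PowerSeries.coeff_trunc, hm]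
  have hdvd2 : (PowerSeries.X : PowerSeries ℚ)^(k+1) ∣
      (1 - PowerSeries.X)^t * f^s - (1 - PowerSeries.X)^t * (Astar : PowerSeries ℚ)^s := by
    rw [← mul_sub]
    exact Dvd.dvd.mul_left (hdvd.trans (sub_dvd_pow_sub_pow _ _ s)) _
  have hcoeff : PowerSeries.coeff i
      ((1 - PowerSeries.X)^t * f^s - (1 - PowerSeries.X)^t * (Astar : PowerSeries ℚ)^s) = 0 :=
    PowerSeries.X_pow_dvd_iff.mp hdvd2 i (by omega)
  have := hcoeff
  rw [map_sub, sub_eq_zero] at this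
  rw [map_sub, ← this, hmain, sub_self]
end

section
/- For all positive integers s, t, define A = x^2-(3s+t)(3s+2t), B = x^2-6s·x+(3s-2t)(3s+t), and C = x^2+6(s+t)·x+(3s+2t)(3s+5t). Then the power series (reciprocal polynomial) identity (A*)^{2s+t} - (B*)^{s+t}·(C*)^s ≡ 0 mod x^5 holds, where for a degree-2 polynomial F(x) = x^2+px+q the reciprocal is F*(x) = 1+px+qx^2; equivalently, A^{2s+t} - B^{s+t}·C^s is a polynomial of degree at most 2(2s+t)-5 = 4s+2t-5. -/
open Polynomial

lemma quad_pow_coeffs (p q : ℚ) (n : ℕ) :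
    ((1 + C p * X + C q * X^2)^n).coeff 0 = 1 ∧
    ((1 + C p * X + C q * X^2)^n).coeff 1 = n*p ∧
    ((1 + C p * X + C q * X^2)^n).coeff 2 = n*q + n*(n-1)/2*p^2 ∧
    ((1 + C p * X + C q * X^2)^n).coeff 3 = n*(n-1)*p*q + n*(n-1)*(n-2)/6*p^3 ∧
    ((1 + C p * X + C q * X^2)^n).coeff 4 = n*(n-1)/2*q^2 + n*(n-1)*(n-2)/2*p^2*q
      + n*(n-1)*(n-2)*(n-3)/24*p^4 := by
  set F : Polynomial ℚ := 1 + C p * X + C q * X^2 with hF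
  have h0 : F.coeff 0 = 1 := by simp [hF]
  have h1 : F.coeff 1 = p := by simp [hF, coeff_one]
  have h2 : F.coeff 2 = q := by simp [hF, coeff_one]
  have h3 : F.coeff 3 = 0 := by simp [hF, coeff_one, coeff_X]
  have h4 : F.coeff 4 = 0 := by simp [hF, coeff_one, coeff_X]
  induction n with
  | zero =>
    refine ⟨?_, ?_, ?_, ?_, ?_⟩ <;> simp [coeff_one]
  | succ n ih =>
    obtain ⟨i0, i1, i2, i3, i4⟩ := ih
    have hpow : F^(n+1) = F^n * F := pow_succ F n
    rw [hpow]
    refine ⟨?_, ?_, ?_, ?_, ?_⟩ <;>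
    · rw [coeff_mul, Finset.Nat.sum_antidiagonal_eq_sum_range_succ_mk]
      simp only [Finset.sum_range_succ, Finset.sum_range_zero, Nat.reduceSub]
      simp only [i0, i1, i2, i3, i4, h0, h1, h2, h3, h4]
      push_cast
      ring

theorem stmt_11 (s t : ℕ) (hs : 0 < s) (ht : 0 < t) :
    let Astar : Polynomial ℚ := 1 - C ((3*s+t) * (3*s+2*t) : ℚ) * X^2
    let Bstar : Polynomial ℚ := 1 - C (6*s : ℚ) * X + C ((3*(s:ℚ)-2*t) * (3*s+t)) * X^2
    let Cstar : Polynomial ℚ := 1 + C (6*((s:ℚ)+t)) * X + C ((3*(s:ℚ)+2*t) * (3*(s:ℚ)+5*t)) * X^2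
    ∀ i < 5, (Astar^(2*s+t) - Bstar^(s+t) * Cstar^s).coeff i = 0 := by
  intro Astar Bstar Cstar i hi
  have hAeq : Astar = 1 + C (0:ℚ) * X + C (-((3*s+t) * (3*s+2*t)) : ℚ) * X^2 := by
    simp [Astar, map_neg]; ring
  have hBeq : Bstar = 1 + C (-(6*s) : ℚ) * X + C ((3*(s:ℚ)-2*t) * (3*s+t)) * X^2 := by
    simp [Bstar, map_neg]; ring
  have hCeq : Cstar = 1 + C (6*((s:ℚ)+t)) * X + C ((3*(s:ℚ)+2*t) * (3*(s:ℚ)+5*t)) * X^2 := rfl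
  obtain ⟨a0, a1, a2, a3, a4⟩ := quad_pow_coeffs (0:ℚ) (-((3*s+t) * (3*s+2*t))) (2*s+t)
  obtain ⟨b0, b1, b2, b3, b4⟩ := quad_pow_coeffs (-(6*s) : ℚ) ((3*(s:ℚ)-2*t) * (3*s+t)) (s+t)
  obtain ⟨c0, c1, c2, c3, c4⟩ := quad_pow_coeffs (6*((s:ℚ)+t)) ((3*(s:ℚ)+2*t) * (3*(s:ℚ)+5*t)) s
  rw [hAeq, hBeq, hCeq]
  interval_cases i <;>
  · rw [coeff_sub, coeff_mul, Finset.Nat.sum_antidiagonal_eq_sum_range_succ_mk]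
    simp only [Finset.sum_range_succ, Finset.sum_range_zero, Nat.reduceSub]
    simp only [a0, a1, a2, a3, a4, b0, b1, b2, b3, b4, c0, c1, c2, c3, c4]
    push_cast
    ring
end

section
/- There exist infinitely many pairs of positive integers (a, b) with a^3 ≠ b^2 such that |a^3 - b^2| ≤ 216√2 · a^{1/2}. -/
private def pell13 : ℕ → ℕ × ℕ
  | 0 => (10, 7)
  | n + 1 => (3 * (pell13 n).1 + 4 * (pell13 n).2, 2 * (pell13 n).1 + 3 * (pell13 n).2)

private lemma pell13_eq (n : ℕ) : (pell13 n).1 ^ 2 = 2 * (pell13 n).2 ^ 2 + 2 := by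
  induction n with
  | zero => rfl
  | succ n ih => simp only [pell13]; nlinarith [ih]

private lemma pell13_v_pos (n : ℕ) : 7 ≤ (pell13 n).2 := by
  induction n with
  | zero => simp [pell13]
  | succ n ih => simp only [pell13]; omega

private lemma pell13_u_pos (n : ℕ) : 1 ≤ (pell13 n).1 := by
  by_contra h
  have h0 : (pell13 n).1 = 0 := by omega
  have := pell13_eq n
  rw [h0] at this
  simp at this

private lemma pell13_v_mono : StrictMono (fun n => (pell13 n).2) := by
  apply strictMono_nat_of_lt_succ
  intro n
  have := pell13_u_pos n
  simp only [pell13]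
  omega

private lemma sq13_cancel : ∀ A B : ℕ, 4 ≤ A → 4 ≤ B →
    2 * A ^ 2 - 10 = 2 * B ^ 2 - 10 → A = B := by
  intro A B hA hB hAB
  have h16a : 16 ≤ A ^ 2 := by nlinarith
  have h16b : 16 ≤ B ^ 2 := by nlinarith
  have h2 : A ^ 2 = B ^ 2 := by
    zify [show 10 ≤ 2 * A ^ 2 by omega, show 10 ≤ 2 * B ^ 2 by omega] at hAB
    have : (A : ℤ) ^ 2 = (B : ℤ) ^ 2 := by linarith
    exact_mod_cast this
  exact Nat.pow_left_injective (by norm_num) h2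

theorem stmt_13 :
    {p : ℕ × ℕ | 0 < p.1 ∧ 0 < p.2 ∧ p.1^3 ≠ p.2^2 ∧
      |(p.1 : ℝ)^3 - (p.2 : ℝ)^2| ≤ 216 * Real.sqrt 2 * Real.sqrt p.1}.Infinite := by
  apply Set.infinite_of_injective_forall_mem
    (f := fun n => (2 * ((pell13 n).2 - 3) ^ 2 - 10,
      (2 * ((pell13 n).2 - 3) ^ 2 + 2 - 6 * ((pell13 n).2 - 3)) * (pell13 n).1))
  case hi =>
    intro a b h
    have h1 : 2 * ((pell13 a).2 - 3) ^ 2 - 10 = 2 * ((pell13 b).2 - 3) ^ 2 - 10 := by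
      simpa using congrArg Prod.fst h
    have ha7 := pell13_v_pos a
    have hb7 := pell13_v_pos b
    have h2 := sq13_cancel _ _ (by omega) (by omega) h1
    exact pell13_v_mono.injective (by omega : (pell13 a).2 = (pell13 b).2)
  case hf =>
    intro n
    simp only [Set.mem_setOf_eq]
    obtain ⟨u, v, hu, hv⟩ : ∃ u v, (pell13 n).1 = u ∧ (pell13 n).2 = v := ⟨_, _, rfl, rfl⟩
    have huv : u ^ 2 = 2 * v ^ 2 + 2 := by rw [← hu, ← hv]; exact pell13_eq n
    have hv7 : 7 ≤ v := hv ▸ pell13_v_pos n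
    have hu1 : 1 ≤ u := hu ▸ pell13_u_pos n
    rw [hu, hv]
    obtain ⟨z, hz⟩ : ∃ z, v = z + 3 := ⟨v - 3, by omega⟩
    subst hz
    simp only [Nat.add_sub_cancel]
    have hz4 : 4 ≤ z := by omega
    have hz16 : 16 ≤ z ^ 2 := by nlinarith
    have ha10 : 10 ≤ 2 * z ^ 2 := by omega
    have hb6 : 6 * z ≤ 2 * z ^ 2 + 2 := by nlinarith
    have hzZ4 : (4 : ℤ) ≤ (z : ℤ) := by exact_mod_cast hz4
    have huvZ : (u : ℤ) ^ 2 = 2 * ((z : ℤ) + 3) ^ 2 + 2 := by exact_mod_cast huv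
    refine ⟨?_, ?_, ?_, ?_⟩
    · zify [ha10]
      nlinarith [hzZ4]
    · have hp : 0 < 2 * z ^ 2 + 2 - 6 * z := by
        zify [hb6]
        nlinarith [hzZ4]
      exact Nat.mul_pos hp hu1
    · intro hc
      zify [ha10, hb6] at hc
      have h0 : (432 : ℤ) * (z : ℤ) - 1080 = 0 := by
        linear_combination hc + (2 * (z : ℤ) ^ 2 + 2 - 6 * (z : ℤ)) ^ 2 * huvZ
      linarith
    · have haR : ((2 * z ^ 2 - 10 : ℕ) : ℝ) = 2 * (z : ℝ) ^ 2 - 10 := by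
        rw [Nat.cast_sub ha10]; push_cast; ring
      have hbR : (((2 * z ^ 2 + 2 - 6 * z) * u : ℕ) : ℝ)
          = (2 * (z : ℝ) ^ 2 + 2 - 6 * (z : ℝ)) * (u : ℝ) := by
        rw [Nat.cast_mul, Nat.cast_sub hb6]; push_cast; ring
      rw [haR, hbR]
      have huvR : (u : ℝ) ^ 2 = 2 * ((z : ℝ) + 3) ^ 2 + 2 := by exact_mod_cast huv
      have key : (2 * (z : ℝ) ^ 2 - 10) ^ 3
          - ((2 * (z : ℝ) ^ 2 + 2 - 6 * (z : ℝ)) * (u : ℝ)) ^ 2 = 432 * (z : ℝ) - 1080 := by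
        linear_combination (-(2 * (z : ℝ) ^ 2 + 2 - 6 * (z : ℝ)) ^ 2) * huvR
      rw [key]
      have hz4R : (4 : ℝ) ≤ (z : ℝ) := by exact_mod_cast hz4
      have hpos : (0 : ℝ) ≤ 432 * (z : ℝ) - 1080 := by linarith
      rw [abs_of_nonneg hpos]
      have ha_nonneg : (0 : ℝ) ≤ 2 * (z : ℝ) ^ 2 - 10 := by nlinarith
      have h216 : (216 : ℝ) = Real.sqrt 46656 := by
        rw [show (46656 : ℝ) = 216 ^ 2 by norm_num, Real.sqrt_sq (by norm_num)]
      rw [h216, ← Real.sqrt_mul (by norm_num), ← Real.sqrt_mul (by positivity)]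
      rw [show (46656 : ℝ) * 2 = 93312 by norm_num]
      rw [Real.le_sqrt hpos]
      · nlinarith
      · nlinarith [ha_nonneg]
end

section
/- Fix integers m, l ≥ 1 and k ≥ 2. Define A(x) = ∑_{i=0}^{k-1} a_i x^i by the backward recurrence a_{k-1} = 1 and a_i = m(i+1)/(mi+l) · a_{i+1} for 0 ≤ i ≤ k-2 (coefficients in ℚ). Then A satisfies the differential equation m·A'(x)·(x-1) + l·A(x) = (m(k-1)+l)·x^{k-1}. -/
open Polynomial

theorem stmt_16 (m l k : ℕ) (hm : 1 ≤ m) (hl : 1 ≤ l) (hk : 2 ≤ k)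
    (a : ℕ → ℚ) (htop : a (k-1) = 1)
    (hrec : ∀ i : ℕ, i < k - 1 → a i = (m * (i+1) : ℚ) / ((m : ℚ) * i + l) * a (i+1)) :
    let A : Polynomial ℚ := ∑ i ∈ Finset.range k, C (a i) * X^i
    C (m : ℚ) * (derivative A) * (X - 1) + C (l : ℚ) * A =
      C ((m : ℚ) * (k - 1) + l) * X^(k-1) := by
  intro A
  have hm0 : (0:ℚ) < (m:ℚ) := by exact_mod_cast hm
  have hl0 : (0:ℚ) < (l:ℚ) := by exact_mod_cast hl
  have hA : ∀ n, A.coeff n = if n < k then a n else 0 := by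
    intro n
    simp only [A, Polynomial.finset_sum_coeff, Polynomial.coeff_C_mul,
      Polynomial.coeff_X_pow, mul_ite, mul_one, mul_zero]
    rw [Finset.sum_ite_eq (Finset.range k) n a]
    simp
  have hkc : ((k:ℚ) - 1) = ((k-1 : ℕ) : ℚ) := by
    have : 1 ≤ k := by omega
    push_cast [Nat.cast_sub this]
    ring
  have key : ∀ n : ℕ, ((m:ℚ)*n + l) * A.coeff n
      = (m:ℚ)*(n+1) * A.coeff (n+1) + (if n = k-1 then (m:ℚ)*((k:ℚ)-1)+l else 0) := by
    intro n
    rw [hA, hA]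
    rcases lt_trichotomy n (k-1) with h | h | h
    · rw [if_pos (by omega), if_pos (by omega), if_neg (by omega)]
      rw [hrec n h]
      have hne : (m:ℚ)*n + l ≠ 0 := by positivity
      field_simp
      try ring
    · rw [if_pos (by omega), if_neg (by omega), if_pos h, h, htop, hkc]
      ring
    · rw [if_neg (by omega), if_neg (by omega), if_neg (by omega)]
      ring
  ext n
  have hXs0 : ((X : ℚ[X]) - 1).coeff 0 = -1 := by simp
  cases n with
  | zero =>
    have h0 := key 0
    simp only [Nat.cast_zero, mul_zero, zero_add] at h0
    simp only [Polynomial.mul_coeff_zero, Polynomial.coeff_add, Polynomial.coeff_C_mul,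
      Polynomial.coeff_derivative, hXs0, Polynomial.coeff_X_pow, Polynomial.coeff_C_zero]
    rw [if_neg (by omega : ¬ (0:ℕ) = k - 1)]
    have h0' : (l:ℚ) * A.coeff 0 = (m:ℚ) * 1 * A.coeff 1 + 0 := by
      rw [h0, if_neg (by omega : ¬ (0:ℕ) = k - 1)]
      try push_cast
      try ring
      try norm_num
    push_cast at h0' ⊢
    linarith [h0']
  | succ n =>
    have hkey := key (n+1)
    have e1 : (C (m:ℚ) * derivative A * (X - 1)).coeff (n+1)
        = (m:ℚ) * (A.coeff (n+1) * (n+1)) - (m:ℚ) * (A.coeff (n+2) * (n+2)) := by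
      rw [mul_sub, mul_one, Polynomial.coeff_sub, Polynomial.coeff_mul_X]
      simp only [Polynomial.coeff_C_mul, Polynomial.coeff_derivative]
      push_cast; ring
    rw [Polynomial.coeff_add, e1, Polynomial.coeff_C_mul, Polynomial.coeff_C_mul,
      Polynomial.coeff_X_pow]
    by_cases hc : n + 1 = k - 1
    · rw [if_pos hc] at hkey ⊢
      push_cast at hkey ⊢
      nlinarith [hkey]
    · rw [if_neg hc] at hkey ⊢
      push_cast at hkey ⊢
      nlinarith [hkey]
end

section
/- Let A, B, R be complex polynomials with A^3 - B^2 = R, deg A = 2k, deg B = 3k, and deg R ≤ k+1 for some positive integer k, with A^3 and B^2 monic of the same leading coefficient so that the cancellation occurs. Then there is a nonzero constant c ∈ ℂ such that 3A'B - 2AB' = c, provided deg(R'A - 3A'R) ≤ 3k and B does not divide any nonzero polynomial of degree less than 3k; more precisely, B·(3A'B - 2AB') = R'A - 3A'R, and comparing degrees forces 3A'B - 2AB' to be a constant. -/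
open Polynomial

lemma deriv_lead (p : Polynomial ℂ) (hp : p.natDegree ≠ 0) :
    (derivative p).natDegree = p.natDegree - 1 ∧
      (derivative p).leadingCoeff = p.leadingCoeff * p.natDegree := by
  have hpne : p ≠ 0 := fun h => hp (by simp [h])
  obtain ⟨m, hm⟩ := Nat.exists_eq_succ_of_ne_zero hp
  have hc : (derivative p).coeff (p.natDegree - 1) = p.leadingCoeff * p.natDegree := by
    rw [hm]
    simp only [Nat.succ_sub_one, coeff_derivative]
    rw [leadingCoeff, hm]
    push_cast
    ring
  have hcne : (derivative p).coeff (p.natDegree - 1) ≠ 0 := by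
    rw [hc]
    exact mul_ne_zero (leadingCoeff_ne_zero.mpr hpne) (Nat.cast_ne_zero.mpr hp)
  have hdeg : (derivative p).natDegree = p.natDegree - 1 :=
    le_antisymm (natDegree_derivative_le p) (le_natDegree_of_ne_zero hcne)
  exact ⟨hdeg, by rw [leadingCoeff, hdeg, hc]⟩

theorem stmt_17 (k : ℕ) (hk : 0 < k) (A B R : Polynomial ℂ)
    (hA : A.Monic) (hB : B.Monic)
    (hdA : A.natDegree = 2*k) (hdB : B.natDegree = 3*k)
    (h : A^3 - B^2 = R) (hdR : R.degree ≤ (k+1 : ℕ)) (hR : R ≠ 0) :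
    B * (3 * derivative A * B - 2 * A * derivative B) =
        derivative R * A - 3 * derivative A * R ∧
      ∃ c : ℂ, c ≠ 0 ∧ 3 * derivative A * B - 2 * A * derivative B = C c := by
  have hd : derivative (A ^ 3 - B ^ 2) = derivative R := congrArg derivative h
  rw [derivative_sub, derivative_pow, derivative_pow] at hd
  push_cast at hd
  have h3C : (C 3 : Polynomial ℂ) = 3 := map_ofNat C 3
  have h2C : (C 2 : Polynomial ℂ) = 2 := map_ofNat C 2
  rw [h3C, h2C] at hd
  have key : B * (3 * derivative A * B - 2 * A * derivative B) =
      derivative R * A - 3 * derivative A * R := by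
    linear_combination A * hd - 3 * derivative A * h
  refine ⟨key, ?_⟩
  have hAne : A ≠ 0 := hA.ne_zero
  have hBne : B ≠ 0 := hB.ne_zero
  have hA'ne : derivative A ≠ 0 := by
    intro h0
    have := natDegree_eq_zero_of_derivative_eq_zero h0
    omega
  have hRnd : R.natDegree ≤ k + 1 := natDegree_le_iff_degree_le.mpr hdR
  -- D ≠ 0
  have hDne : 3 * derivative A * B - 2 * A * derivative B ≠ 0 := by
    intro h0
    rw [h0, mul_zero, eq_comm, sub_eq_zero] at key
    by_cases hd0 : R.natDegree = 0
    · have : derivative R = 0 := by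
        rw [eq_C_of_natDegree_eq_zero hd0]; simp
      rw [this, zero_mul] at key
      have : (3 : Polynomial ℂ) * derivative A * R ≠ 0 :=
        mul_ne_zero (mul_ne_zero (by norm_num) hA'ne) hR
      exact this key.symm
    · obtain ⟨hRd, hRl⟩ := deriv_lead R hd0
      obtain ⟨hAd, hAl⟩ := deriv_lead A (by omega)
      have hkey := congrArg leadingCoeff key
      rw [leadingCoeff_mul, leadingCoeff_mul, leadingCoeff_mul, hA.leadingCoeff,
        hRl, hAl, hA.leadingCoeff, hdA] at hkey
      have h3 : (3 : Polynomial ℂ).leadingCoeff = 3 := by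
        simp [leadingCoeff]
      rw [h3] at hkey
      have hrne : R.leadingCoeff ≠ 0 := leadingCoeff_ne_zero.mpr hR
      push_cast at hkey
      have h1 : ((R.natDegree : ℂ) - ((6 * k : ℕ) : ℂ)) * R.leadingCoeff = 0 := by
        push_cast
        linear_combination hkey
      have h2 : (R.natDegree : ℂ) = ((6 * k : ℕ) : ℂ) :=
        sub_eq_zero.mp ((mul_eq_zero.mp h1).resolve_right hrne)
      have h4 : R.natDegree = 6 * k := Nat.cast_inj.mp h2
      omega
  -- degree count
  have hS : (derivative R * A - 3 * derivative A * R).natDegree ≤ 3 * k := by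
    refine (natDegree_sub_le _ _).trans (max_le ?_ ?_)
    · calc (derivative R * A).natDegree ≤ (derivative R).natDegree + A.natDegree :=
          natDegree_mul_le
        _ ≤ (R.natDegree - 1) + 2 * k := by
          rw [hdA]; exact add_le_add_left (natDegree_derivative_le R) _
        _ ≤ 3 * k := by omega
    · calc (3 * derivative A * R).natDegree
          ≤ (3 * derivative A).natDegree + R.natDegree := natDegree_mul_le
        _ ≤ ((3 : Polynomial ℂ).natDegree + (derivative A).natDegree) + R.natDegree :=
          add_le_add_left natDegree_mul_le _
        _ ≤ (0 + (2 * k - 1)) + (k + 1) := by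
          refine add_le_add (add_le_add ?_ ?_) hRnd
          · simp
          · have := natDegree_derivative_le A
            omega
        _ ≤ 3 * k := by omega
  have hmul : (B * (3 * derivative A * B - 2 * A * derivative B)).natDegree =
      3 * k + (3 * derivative A * B - 2 * A * derivative B).natDegree := by
    rw [natDegree_mul hBne hDne, hdB]
  have hD0 : (3 * derivative A * B - 2 * A * derivative B).natDegree = 0 := by
    have := key ▸ hmul
    omega
  refine ⟨(3 * derivative A * B - 2 * A * derivative B).coeff 0, ?_,
    eq_C_of_natDegree_eq_zero hD0⟩
  intro hc0
  exact hDne (by rw [eq_C_of_natDegree_eq_zero hD0, hc0, map_zero])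
end

section
/- For every integer k ≥ 0, set a = 2k+4 and let A* ∈ ℚ[x] be the truncation to degree 2k+3 of the formal power series (1+x)^2·(1+a x^2)^{(2k+1)/2} ∈ ℚ[[x]]. Then (1+x)^4·(1+(2k+4)x^2)^{2k+1} - (A*)^2 has order of vanishing at least 2k+5 at x = 0. -/
open Polynomial PowerSeries Finset

noncomputable def Ev (b : PowerSeries ℚ) : PowerSeries ℚ :=
  PowerSeries.mk fun n => if 2 ∣ n then PowerSeries.coeff (R := ℚ) (n/2) b else 0

lemma Ev_mul (b1 b2 : PowerSeries ℚ) : Ev b1 * Ev b2 = Ev (b1 * b2) := by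
  ext n
  rw [PowerSeries.coeff_mul]
  simp only [Ev, PowerSeries.coeff_mk]
  by_cases hn : 2 ∣ n
  · obtain ⟨m, rfl⟩ := hn
    have hsub : (Finset.HasAntidiagonal.antidiagonal m).image (fun p => (2*p.1, 2*p.2)) ⊆
        Finset.HasAntidiagonal.antidiagonal (2*m) := by
      intro p hp
      simp only [Finset.mem_image, Finset.HasAntidiagonal.mem_antidiagonal, Prod.ext_iff] at hp ⊢
      obtain ⟨q, hq, h1, h2⟩ := hp; omega
    have hzero : ∀ p ∈ Finset.HasAntidiagonal.antidiagonal (2*m),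
        p ∉ (Finset.HasAntidiagonal.antidiagonal m).image (fun p => (2*p.1, 2*p.2)) →
        (if 2 ∣ p.1 then PowerSeries.coeff (R := ℚ) (p.1/2) b1 else 0) *
          (if 2 ∣ p.2 then PowerSeries.coeff (R := ℚ) (p.2/2) b2 else 0) = 0 := by
      intro p hp hnp
      simp only [Finset.mem_image, Finset.HasAntidiagonal.mem_antidiagonal, Prod.ext_iff] at hp hnp
      by_cases h1 : 2 ∣ p.1
      · exfalso
        obtain ⟨i, hi⟩ := h1
        exact hnp ⟨(i, m - i), by omega, by omega, by omega⟩
      · rw [if_neg h1, zero_mul]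
    rw [if_pos ⟨m, rfl⟩, show (2*m)/2 = m by omega, PowerSeries.coeff_mul,
      ← Finset.sum_subset hsub hzero,
      Finset.sum_image (fun p _ q _ h => by
        simp only [Prod.mk.injEq] at h; exact Prod.ext (by omega) (by omega))]
    apply Finset.sum_congr rfl
    intro p hp
    rw [if_pos ⟨p.1, rfl⟩, if_pos ⟨p.2, rfl⟩,
      show 2*p.1/2 = p.1 by omega, show 2*p.2/2 = p.2 by omega]
  · rw [if_neg hn]
    apply Finset.sum_eq_zero
    intro p hp
    have h := Finset.HasAntidiagonal.mem_antidiagonal.mp hp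
    by_cases h1 : 2 ∣ p.1
    · have h2 : ¬ 2 ∣ p.2 := by omega
      rw [if_neg h2, mul_zero]
    · rw [if_neg h1, zero_mul]

noncomputable def Bc (r a : ℚ) : PowerSeries ℚ :=
  PowerSeries.mk fun m => Ring.choose r m * a^m

lemma Bc_mul (r s a : ℚ) : Bc r a * Bc s a = Bc (r+s) a := by
  ext m
  rw [PowerSeries.coeff_mul]
  simp only [Bc, PowerSeries.coeff_mk]
  rw [Ring.add_choose_eq m (Commute.all r s), Finset.sum_mul]
  apply Finset.sum_congr rfl
  intro p hp
  have h := Finset.HasAntidiagonal.mem_antidiagonal.mp hp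
  rw [← h, pow_add]; ring

lemma Bc_zero (a : ℚ) : Bc 0 a = 1 := by
  ext m
  simp only [Bc, PowerSeries.coeff_mk, PowerSeries.coeff_one]
  rcases m with _ | m
  · simp
  · rw [show (0:ℚ) = ((0:ℕ):ℚ) by norm_num, Ring.choose_natCast]
    simp

lemma Ev_Bc_one (a : ℚ) : Ev (Bc 1 a) = 1 + PowerSeries.C (R := ℚ) a * PowerSeries.X^2 := by
  ext n
  simp only [Ev, Bc, PowerSeries.coeff_mk, map_add, PowerSeries.coeff_one,
    PowerSeries.coeff_C_mul, PowerSeries.coeff_X_pow]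
  rw [show (1:ℚ) = ((1:ℕ):ℚ) by norm_num, ]
  rcases n with _ | _ | _ | n
  · simp [Ring.choose_natCast]
  · norm_num
  · norm_num [Ring.choose_natCast]
  · have h1 : ¬ (n + 3 = 0) := by omega
    have h2 : ¬ (n + 3 = 2) := by omega
    by_cases hd : 2 ∣ (n+3)
    · rw [if_pos hd, Ring.choose_natCast]
      have : (n+3)/2 ≥ 2 := by omega
      rw [Nat.choose_eq_zero_of_lt (by omega)]
      simp [h1, h2]
    · simp [hd, h1, h2]

lemma Ev_one : Ev 1 = 1 := by
  ext n
  simp only [Ev, PowerSeries.coeff_mk, PowerSeries.coeff_one]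
  rcases n with _ | n
  · simp
  · by_cases hd : 2 ∣ (n+1)
    · rw [if_pos hd, if_neg (by omega), if_neg (by omega)]
    · simp [hd]

lemma Ev_Bc_nat (M : ℕ) (a : ℚ) :
    Ev (Bc M a) = (1 + PowerSeries.C (R := ℚ) a * PowerSeries.X^2)^M := by
  induction M with
  | zero => simpa [Bc_zero] using Ev_one
  | succ M ih =>
    have : ((M+1 : ℕ) : ℚ) = (M : ℚ) + 1 := by push_cast; ring
    rw [this, ← Bc_mul, ← Ev_mul, ih, Ev_Bc_one, pow_succ]
    ring

lemma key_fact (k : ℕ) :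
    Ring.choose ((2*k+1 : ℚ)/2) (k+2) * (2*k+4) + Ring.choose ((2*k+1 : ℚ)/2) (k+1) = 0 := by
  set r : ℚ := (2*k+1)/2 with hr
  have hd : (descPochhammer ℤ (k+2)).smeval r =
      (descPochhammer ℤ (k+1)).smeval r * (r - (k+1)) := by
    rw [descPochhammer_succ_right, Polynomial.smeval_mul]
    congr 1
    simp [Polynomial.smeval_sub, Polynomial.smeval_X, Polynomial.smeval_natCast]
  rw [Ring.descPochhammer_eq_factorial_smul_choose,
    Ring.descPochhammer_eq_factorial_smul_choose, nsmul_eq_mul, nsmul_eq_mul] at hd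
  have hfac : ((k+2).factorial : ℚ) = (k+2) * (k+1).factorial := by
    rw [Nat.factorial_succ]; push_cast; ring
  have hrk : r - (k+1) = -1/2 := by rw [hr]; field_simp; ring
  rw [hfac, hrk] at hd
  have hne : ((k+1).factorial : ℚ) ≠ 0 := by positivity
  have hd2 : ((k:ℚ)+2) * Ring.choose r (k+2) = Ring.choose r (k+1) * (-1/2) := by
    apply mul_left_cancel₀ hne
    linear_combination hd
  linear_combination 2 * hd2

theorem stmt_18 (k : ℕ) :
    let a : ℚ := 2*k + 4
    -- formal binomial series (1 + a x^2)^((2k+1)/2)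
    let g : PowerSeries ℚ := PowerSeries.mk fun n =>
      if 2 ∣ n then Ring.choose ((2*k+1 : ℚ)/2) (n/2) * a^(n/2) else 0
    let f : PowerSeries ℚ := (1 + PowerSeries.X)^2 * g
    let Astar : Polynomial ℚ := PowerSeries.trunc (2*k+4) f
    ∀ i < 2*k+5,
      PowerSeries.coeff (R := ℚ) i
        ((1 + PowerSeries.X)^4 * (1 + PowerSeries.C (R := ℚ) a * PowerSeries.X^2)^(2*k+1)
          - (Astar : PowerSeries ℚ)^2) = 0 := by
  intro a g f Astar i hi
  have ha : a = 2*(k:ℚ) + 4 := rfl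
  have hgc : ∀ n, PowerSeries.coeff (R := ℚ) n g
      = if 2 ∣ n then Ring.choose ((2*(k:ℚ)+1)/2) (n/2) * a^(n/2) else 0 :=
    fun n => PowerSeries.coeff_mk n _
  have hgE : ∀ n, PowerSeries.coeff (R := ℚ) n (Ev (Bc ((2*(k:ℚ)+1)/2) a))
      = if 2 ∣ n then PowerSeries.coeff (R := ℚ) (n/2) (Bc ((2*(k:ℚ)+1)/2) a) else 0 :=
    fun n => PowerSeries.coeff_mk n _
  have hBc : ∀ m, PowerSeries.coeff (R := ℚ) m (Bc ((2*(k:ℚ)+1)/2) a)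
      = Ring.choose ((2*(k:ℚ)+1)/2) m * a^m :=
    fun m => PowerSeries.coeff_mk m _
  have hg : g = Ev (Bc ((2*(k:ℚ)+1)/2) a) := by
    ext n
    rw [hgc, hgE, hBc (n/2)]
  have hfr : f = (1 + PowerSeries.X)^2 * g := rfl
  have hgg : g * g = (1 + PowerSeries.C (R := ℚ) a * PowerSeries.X^2)^(2*k+1) := by
    rw [hg, Ev_mul, Bc_mul,
      show ((2*(k:ℚ)+1)/2 + (2*(k:ℚ)+1)/2 : ℚ) = ((2*k+1 : ℕ) : ℚ) by push_cast; ring,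
      Ev_Bc_nat]
  have hff : f * f = (1 + PowerSeries.X)^4
      * (1 + PowerSeries.C (R := ℚ) a * PowerSeries.X^2)^(2*k+1) := by
    rw [show f * f = (1 + PowerSeries.X)^4 * (g*g) from by rw [hfr]; ring, hgg]
  have hcf : PowerSeries.coeff (R := ℚ) (2*k+4) f = 0 := by
    have hsplit : f = g + PowerSeries.X*g + PowerSeries.X*g + PowerSeries.X^2*g := by
      rw [hfr]; ring
    have h1 : PowerSeries.coeff (R := ℚ) (2*k+4) (PowerSeries.X*g)
        = PowerSeries.coeff (R := ℚ) (2*k+3) g := by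
      rw [← pow_one (PowerSeries.X : PowerSeries ℚ), PowerSeries.coeff_X_pow_mul',
        if_pos (by omega)]
      congr 1
    have h2 : PowerSeries.coeff (R := ℚ) (2*k+4) (PowerSeries.X^2*g)
        = PowerSeries.coeff (R := ℚ) (2*k+2) g := by
      rw [PowerSeries.coeff_X_pow_mul', if_pos (by omega)]
      congr 1
    have d1 : 2 ∣ 2*k+4 := ⟨k+2, by omega⟩
    have d2 : 2 ∣ 2*k+2 := ⟨k+1, by omega⟩
    have d3 : ¬ 2 ∣ 2*k+3 := by omega
    rw [hsplit, map_add, map_add, map_add, h1, h2, hgc, hgc, hgc]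
    simp only [d1, d2, d3, if_true, if_false, ite_true, ite_false,
      show (2*k+4)/2 = k+2 from by omega, show (2*k+2)/2 = k+1 from by omega, ha]
    have := key_fact k
    rw [show ((2*(k:ℕ)+1 : ℚ)) = 2*(k:ℚ)+1 from by ring] at this
    linear_combination (2*(k:ℚ)+4)^(k+1) * this
  have hsub0 : ∀ j ≤ 2*k+4, PowerSeries.coeff (R := ℚ) j (f - (Astar : PowerSeries ℚ)) = 0 := by
    intro j hj
    rw [map_sub, Polynomial.coeff_coe,
      show Astar = PowerSeries.trunc (2*k+4) f from rfl, PowerSeries.coeff_trunc]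
    rcases lt_or_eq_of_le hj with h | h
    · rw [if_pos (by omega), sub_self]
    · rw [if_neg (by omega), sub_zero, h, hcf]
  rw [← hff, show f * f - (Astar : PowerSeries ℚ)^2
      = (f - (Astar : PowerSeries ℚ)) * (f + (Astar : PowerSeries ℚ)) from by ring,
    PowerSeries.coeff_mul]
  apply Finset.sum_eq_zero
  intro p hp
  have h := Finset.HasAntidiagonal.mem_antidiagonal.mp hp
  rw [hsub0 p.1 (by omega), zero_mul]
end
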